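/- Let G be a finite group, b a central idempotent of the group algebra OG, and B = OGb. Let X be an invertible B-B-bimodule and R a subgroup of G such that X is isomorphic, as a B-B-bimodule, to a direct summand of OG ⊗_{OR} X (where X is regarded as an OR-B-bimodule by restriction of the left action). Then every B-module U is isomorphic to a direct summand of Ind_R^G(Res_R(U)) = OG ⊗_{OR} U; that is, every B-module is relatively R-projective. -/

import Mathlib

open scoped TensorProduct
noncomputable section

universe u v w

namespace Paper

/-! ## Tensor product over a possibly noncommutative ring -/

section NCT

variable (A : Type u) [Ring A]
variable (M : Type v) [AddCommGroup M] [Module Aᵐᵒᵖ M]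
variable (N : Type w) [AddCommGroup N] [Module A N]

/-- The submodule of relations defining the balanced tensor product `M ⊗_A N` of a right
`A`-module `M` and a left `A`-module `N`. -/
def tensorRel : Submodule ℤ (TensorProduct ℤ M N) :=
  Submodule.span ℤ {z | ∃ (a : A) (m : M) (n : N),
    z = (MulOpposite.op a • m) ⊗ₜ[ℤ] n - m ⊗ₜ[ℤ] (a • n)}

/-- The balanced tensor product `M ⊗_A N` of a right `A`-module and a left `A`-module. -/
def Tensor : Type (max v w) := TensorProduct ℤ M N ⧸ tensorRel A M N

instance : AddCommGroup (Tensor A M N) :=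
  inferInstanceAs (AddCommGroup (TensorProduct ℤ M N ⧸ tensorRel A M N))

/-- The quotient map onto the balanced tensor product. -/
def Tensor.q (t : TensorProduct ℤ M N) : Tensor A M N := Submodule.Quotient.mk t

lemma Tensor.q_surjective : Function.Surjective (Tensor.q A M N) :=
  Submodule.Quotient.mk_surjective _

lemma Tensor.q_add (t s : TensorProduct ℤ M N) :
    Tensor.q A M N (t + s) = Tensor.q A M N t + Tensor.q A M N s := rfl

/-- The canonical map `M → N → M ⊗_A N`. -/
def Tensor.mk (m : M) (n : N) : Tensor A M N :=
  Tensor.q A M N (m ⊗ₜ[ℤ] n)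

section Left

variable (B : Type*) [Ring B] [Module B M] [SMulCommClass Aᵐᵒᵖ B M]

/-- Left multiplication by an element of `B` on the balanced tensor product, when `M` is a
`(B,A)`-bimodule. -/
def Tensor.lsmulAux (b : B) : Tensor A M N →ₗ[ℤ] Tensor A M N :=
  Submodule.mapQ _ _ (AddMonoidHom.toIntLinearMap
      (DistribSMul.toAddMonoidHom (TensorProduct ℤ M N) b)) (by
    rw [tensorRel, Submodule.span_le]
    rintro z ⟨a, m, n, rfl⟩
    simp only [SetLike.mem_coe, Submodule.mem_comap, AddMonoidHom.coe_toIntLinearMap,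
      DistribSMul.toAddMonoidHom_apply, smul_sub, TensorProduct.smul_tmul']
    rw [← smul_comm (MulOpposite.op a) b m]
    exact Submodule.subset_span ⟨a, b • m, n, rfl⟩)

instance : SMul B (Tensor A M N) :=
  ⟨fun b x => Tensor.lsmulAux A M N B b x⟩

instance Tensor.instLeftModule : Module B (Tensor A M N) :=
  Function.Surjective.module B
    { toFun := Submodule.Quotient.mk (p := tensorRel A M N),
      map_zero' := rfl,
      map_add' := fun _ _ => rfl }
    (Submodule.Quotient.mk_surjective _)
    (fun b x => rfl)

end Left


section Right

variable (C : Type*) [Ring C] [Module Cᵐᵒᵖ N] [SMulCommClass A Cᵐᵒᵖ N]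

/-- Right multiplication by an element of `Cᵐᵒᵖ` on the balanced tensor product, when `N` is an
`(A,C)`-bimodule. -/
def Tensor.rsmulAux (c : Cᵐᵒᵖ) : Tensor A M N →ₗ[ℤ] Tensor A M N :=
  Submodule.mapQ _ _ (LinearMap.lTensor M (AddMonoidHom.toIntLinearMap
      (DistribSMul.toAddMonoidHom N c))) (by
    rw [tensorRel, Submodule.span_le]
    rintro z ⟨a, m, n, rfl⟩
    change (LinearMap.lTensor M (AddMonoidHom.toIntLinearMap (DistribSMul.toAddMonoidHom N c)) :
      TensorProduct ℤ M N → TensorProduct ℤ M N)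
      ((MulOpposite.op a • m) ⊗ₜ[ℤ] n - m ⊗ₜ[ℤ] (a • n)) ∈ Submodule.span ℤ _
    simp only [SetLike.mem_coe, Submodule.mem_comap, map_sub, LinearMap.lTensor_tmul,
      AddMonoidHom.coe_toIntLinearMap, DistribSMul.toAddMonoidHom_apply]
    rw [← smul_comm a c n]
    exact Submodule.subset_span ⟨a, m, c • n, rfl⟩)

instance : SMul Cᵐᵒᵖ (Tensor A M N) :=
  ⟨fun c x => Tensor.rsmulAux A M N C c x⟩

lemma Tensor.rsmul_mk (c : Cᵐᵒᵖ) (t : TensorProduct ℤ M N) :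
    c • (Tensor.q A M N t) =
      Tensor.q A M N ((LinearMap.lTensor M (AddMonoidHom.toIntLinearMap
        (DistribSMul.toAddMonoidHom N c))) t) := rfl

instance Tensor.instRightModule : Module Cᵐᵒᵖ (Tensor A M N) where
  one_smul x := by
    obtain ⟨t, rfl⟩ := Tensor.q_surjective A M N x
    rw [Tensor.rsmul_mk]
    congr 1
    induction t with
    | zero => simp
    | tmul m n => simp
    | add x y hx hy => simp [map_add, hx, hy]
  mul_smul c d x := by
    obtain ⟨t, rfl⟩ := Tensor.q_surjective A M N x
    rw [Tensor.rsmul_mk, Tensor.rsmul_mk, Tensor.rsmul_mk]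
    congr 1
    induction t with
    | zero => simp
    | tmul m n => simp [mul_smul]
    | add x y hx hy => simp only [map_add, hx, hy]
  smul_zero c := map_zero (Tensor.rsmulAux A M N C c)
  smul_add c x y := map_add (Tensor.rsmulAux A M N C c) x y
  add_smul c d x := by
    obtain ⟨t, rfl⟩ := Tensor.q_surjective A M N x
    rw [Tensor.rsmul_mk, Tensor.rsmul_mk, Tensor.rsmul_mk, ← Tensor.q_add]
    congr 1
    induction t with
    | zero => simp
    | tmul m n => simp [add_smul, TensorProduct.tmul_add]
    | add x y hx hy => rw [map_add, hx, hy, map_add, map_add]; abel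
  zero_smul x := by
    obtain ⟨t, rfl⟩ := Tensor.q_surjective A M N x
    rw [Tensor.rsmul_mk]
    show _ = Tensor.q A M N 0
    congr 1
    induction t with
    | zero => simp
    | tmul m n => simp
    | add x y hx hy => simp [map_add, hx, hy]

instance Tensor.instSMulCommClass (B : Type*) [Ring B] [Module B M] [SMulCommClass Aᵐᵒᵖ B M] :
    SMulCommClass B Cᵐᵒᵖ (Tensor A M N) where
  smul_comm b c x := by
    obtain ⟨t, rfl⟩ := Tensor.q_surjective A M N x
    show Tensor.q A M N _ = Tensor.q A M N _
    congr 1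
    change b • (LinearMap.lTensor M (AddMonoidHom.toIntLinearMap (DistribSMul.toAddMonoidHom N c)) :
      TensorProduct ℤ M N → TensorProduct ℤ M N) t =
      (LinearMap.lTensor M (AddMonoidHom.toIntLinearMap (DistribSMul.toAddMonoidHom N c)) :
      TensorProduct ℤ M N → TensorProduct ℤ M N) (b • t)
    induction t with
    | zero => simp
    | tmul m n => simp [TensorProduct.smul_tmul']
    | add x y hx hy => simp only [map_add, hx, hy, smul_add]

instance Tensor.instSMulCommClass' (B : Type*) [Ring B] [Module B M] [SMulCommClass Aᵐᵒᵖ B M] :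
    SMulCommClass Cᵐᵒᵖ B (Tensor A M N) :=
  SMulCommClass.symm _ _ _

end Right

end NCT


/-! ## Generic module-theoretic notions -/

section Generic

variable (R : Type*) [Ring R]

/-- `M` is (isomorphic to) a direct summand of `W` as `R`-modules. -/
def IsDirectSummand (W M : Type*) [AddCommMonoid W] [AddCommMonoid M]
    [Module R W] [Module R M] : Prop :=
  ∃ (ι : M →ₗ[R] W) (p : W →ₗ[R] M), p.comp ι = LinearMap.id

/-- There exists an isomorphism of `R`-modules `X ≅ Y`. -/
def ModIsoNonempty (X Y : Type*) [AddCommMonoid X] [AddCommMonoid Y]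
    [Module R X] [Module R Y] : Prop :=
  ∃ e : X ≃+ Y, ∀ (r : R) (x : X), e (r • x) = r • e x

/-- There exists an isomorphism of `(B,C)`-bimodules `X ≅ Y` (right `C`-module structures
given as left `Cᵐᵒᵖ`-module structures). -/
def BimodIsoNonempty (B C : Type*) [Ring B] [Ring C] (X Y : Type*)
    [AddCommMonoid X] [AddCommMonoid Y] [Module B X] [Module Cᵐᵒᵖ X]
    [Module B Y] [Module Cᵐᵒᵖ Y] : Prop :=
  ∃ e : X ≃+ Y, (∀ (b : B) (x : X), e (b • x) = b • e x) ∧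
    (∀ (c : Cᵐᵒᵖ) (x : X), e (c • x) = c • e x)

/-- `M` is (isomorphic to) a direct summand of `W` as a `(B,C)`-bimodule. -/
def IsBimodDirectSummand (B C : Type*) [Ring B] [Ring C] (W M : Type*)
    [AddCommMonoid W] [AddCommMonoid M] [Module B W] [Module Cᵐᵒᵖ W]
    [Module B M] [Module Cᵐᵒᵖ M] : Prop :=
  ∃ (ι : M →+ W) (p : W →+ M),
    (∀ (b : B) (m : M), ι (b • m) = b • ι m) ∧
    (∀ (c : Cᵐᵒᵖ) (m : M), ι (c • m) = c • ι m) ∧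
    (∀ (b : B) (w : W), p (b • w) = b • p w) ∧
    (∀ (c : Cᵐᵒᵖ) (w : W), p (c • w) = c • p w) ∧
    p.comp ι = AddMonoidHom.id M

/-- An `R`-module is indecomposable if it is nonzero and its only idempotent endomorphisms
are `0` and the identity. -/
def IsIndecomposableModule (M : Type*) [AddCommMonoid M] [Module R M] : Prop :=
  Nontrivial M ∧ ∀ f : M →ₗ[R] M, f.comp f = f → f = 0 ∨ f = LinearMap.id

/-- A `(B,C)`-bimodule is indecomposable if it is nonzero and its only idempotent bimodule
endomorphisms are `0` and the identity. -/
def IsIndecomposableBimod (B C : Type*) [Ring B] [Ring C] (M : Type*) [AddCommMonoid M]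
    [Module B M] [Module Cᵐᵒᵖ M] : Prop :=
  Nontrivial M ∧ ∀ f : M →+ M, (∀ (b : B) (m : M), f (b • m) = b • f m) →
    (∀ (c : Cᵐᵒᵖ) (m : M), f (c • m) = c • f m) → f.comp f = f → f = 0 ∨ f = AddMonoidHom.id M

/-- An idempotent of a ring is primitive if it is nonzero and admits no decomposition as a sum
of two nonzero orthogonal idempotents. -/
def IsPrimitiveIdempotent (e : R) : Prop :=
  e * e = e ∧ e ≠ 0 ∧ ∀ c d : R, c * c = c → d * d = d → c * d = 0 → d * c = 0 →
    e = c + d → c = 0 ∨ d = 0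

/-- Two idempotents are conjugate if some unit conjugates one into the other. -/
def AreConjugateIdempotents (e f : R) : Prop :=
  ∃ u : Rˣ, (u : R) * e * (↑u⁻¹ : R) = f

end Generic

/-! ## Bimodules over a ring, and invertible bimodules -/

/-- A bundled `(A,A)`-bimodule. -/
structure BimodPack (A : Type u) [Ring A] : Type (u + 1) where
  V : Type u
  [acg : AddCommGroup V]
  [lmod : Module A V]
  [rmod : Module Aᵐᵒᵖ V]
  [comm : SMulCommClass A Aᵐᵒᵖ V]
  [comm' : SMulCommClass Aᵐᵒᵖ A V]

attribute [instance] BimodPack.acg BimodPack.lmod BimodPack.rmod BimodPack.comm BimodPack.comm'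

/-- An `(A,A)`-bimodule `M` is invertible if it is finitely generated projective as a left and
as a right `A`-module and there is a bimodule `N` with `M ⊗_A N ≅ A ≅ N ⊗_A M` as
`(A,A)`-bimodules. -/
def IsInvertibleBimod (A : Type u) [Ring A] (M : Type u) [AddCommGroup M] [Module A M]
    [Module Aᵐᵒᵖ M] [SMulCommClass A Aᵐᵒᵖ M] [SMulCommClass Aᵐᵒᵖ A M] : Prop :=
  Module.Finite A M ∧ Module.Projective A M ∧ Module.Finite Aᵐᵒᵖ M ∧ Module.Projective Aᵐᵒᵖ M ∧
  ∃ N : BimodPack A, (Module.Finite A N.V ∧ Module.Projective A N.V ∧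
      Module.Finite Aᵐᵒᵖ N.V ∧ Module.Projective Aᵐᵒᵖ N.V) ∧
    BimodIsoNonempty A A (Tensor A M N.V) A ∧ BimodIsoNonempty A A (Tensor A N.V M) A

/-! ## Group algebras and bimodules over them -/

section GroupAlgebra

/-- commutation of the action of an algebra with the action of scalars -/
lemma algebra_smul_comm {R A M : Type*} [CommSemiring R] [Semiring A] [Algebra R A]
    [AddCommMonoid M] [Module A M] [Module R M] [IsScalarTower R A M]
    (r : R) (a : A) (m : M) : a • r • m = r • a • m := by
  rw [← algebraMap_smul A r m, ← mul_smul, ← Algebra.commutes, mul_smul, algebraMap_smul]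

variable (O : Type u) [CommRing O]

/-- The group algebra of `G` over `O`. -/
abbrev GA (G : Type u) [Group G] : Type u := MonoidAlgebra O G

variable (G : Type u) [Group G]

/-- A bimodule over the group algebra `OG` is `O`-central if the left and right actions of `O`
agree. -/
class OCentralBimodule (M : Type u) [AddCommGroup M] [Module (GA O G)ᵐᵒᵖ M]
    [Module O M] : Prop where
  right_compat : ∀ (r : O) (m : M), MulOpposite.op (algebraMap O (GA O G) r) • m = r • m

section BiRep

variable (M : Type u) [AddCommGroup M] [Module (GA O G) M] [Module (GA O G)ᵐᵒᵖ M]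
  [SMulCommClass (GA O G) (GA O G)ᵐᵒᵖ M] [Module O M] [IsScalarTower O (GA O G) M]
  [OCentralBimodule O G M]

lemma ga_right_smul_comm (r : O) (a : (GA O G)ᵐᵒᵖ) (m : M) :
    a • r • m = r • a • m := by
  rw [← OCentralBimodule.right_compat (G := G) r m, ← mul_smul,
    ← OCentralBimodule.right_compat (G := G) r (a • m), ← mul_smul]
  congr 1
  rw [← MulOpposite.op_unop a, ← MulOpposite.op_mul, ← MulOpposite.op_mul, Algebra.commutes]

/-- The `O(G × G)`-module structure on an `OG`-`OG`-bimodule, given by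
`(x, y) • m = x • m • y⁻¹`. -/
def biRep : Representation O (G × G) M where
  toFun g :=
    { toFun := fun m =>
        (MonoidAlgebra.of O G g.1) • (MulOpposite.op (MonoidAlgebra.of O G g.2⁻¹) • m)
      map_add' := fun x y => by simp only [smul_add]
      map_smul' := fun r m => by
        simp only [RingHom.id_apply]
        rw [ga_right_smul_comm O G M, algebra_smul_comm] }
  map_one' := by
    ext m
    simp only [Prod.fst_one, Prod.snd_one, inv_one, map_one, LinearMap.coe_mk,
      AddHom.coe_mk, LinearMap.id_coe, id_eq]
    rw [MulOpposite.op_one, one_smul, one_smul]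
    exact (Module.End.one_apply m).symm
  map_mul' g h := by
    ext m
    simp only [Prod.fst_mul, Prod.snd_mul, LinearMap.coe_mk, AddHom.coe_mk, Module.End.mul_apply,
      mul_inv_rev, map_mul]
    rw [MulOpposite.op_mul, mul_smul, mul_smul]
    congr 1
    rw [smul_comm (MonoidAlgebra.of O G h.1)]

/-- An `OG`-`OG`-bimodule regarded as an `O(G × G)`-module. -/
abbrev DiagMod : Type u := (biRep O G M).asModule

end BiRep

instance {k G V : Type*} [CommSemiring k] [Monoid G] [AddCommGroup V] [Module k V]
    (rho : Representation k G V) : AddCommGroup rho.asModule :=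
  inferInstanceAs (AddCommGroup V)

/-- Restriction of a module over a group algebra along a group homomorphism. -/
def ResAlong {H K : Type u} [Group H] [Group K] (f : H →* K) (X : Type u)
    [AddCommMonoid X] [Module (MonoidAlgebra O K) X] : Type u := X

instance {H K : Type u} [Group H] [Group K] (f : H →* K) (X : Type u) [AddCommMonoid X]
    [Module (MonoidAlgebra O K) X] : AddCommMonoid (ResAlong O f X) :=
  inferInstanceAs (AddCommMonoid X)

instance ResAlong.instAddCommGroup {H K : Type u} [Group H] [Group K] (f : H →* K) (X : Type u)
    [AddCommGroup X] [Module (MonoidAlgebra O K) X] : AddCommGroup (ResAlong O f X) :=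
  inferInstanceAs (AddCommGroup X)

noncomputable instance {H K : Type u} [Group H] [Group K] (f : H →* K) (X : Type u)
    [AddCommMonoid X] [Module (MonoidAlgebra O K) X] :
    Module (MonoidAlgebra O H) (ResAlong O f X) :=
  Module.compHom X (MonoidAlgebra.mapDomainRingHom O f)

end GroupAlgebra

/-! ## Relative projectivity, vertices and sources -/

section Vertices

variable (O : Type u) [CommRing O]
variable {Gam : Type u} [Group Gam]

/-- The action of a group element on a module over the group algebra, as an additive map. -/
def gAct (X : Type u) [AddCommMonoid X] [Module (MonoidAlgebra O Gam) X] (g : Gam) : X →+ X :=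
  DistribSMul.toAddMonoidHom X (MonoidAlgebra.of O Gam g)

/-- An additive endomorphism of a module over `O Γ` which is `O`-linear and commutes with the
action of the subgroup `Q`, i.e. an `OQ`-endomorphism. -/
def IsRelEndo (Q : Subgroup Gam) (X : Type u) [AddCommMonoid X]
    [Module (MonoidAlgebra O Gam) X] (f : X →+ X) : Prop :=
  (∀ (r : O) (x : X), f (algebraMap O (MonoidAlgebra O Gam) r • x) =
      algebraMap O (MonoidAlgebra O Gam) r • f x) ∧
  ∀ g ∈ Q, ∀ x : X, f (gAct O X g x) = gAct O X g (f x)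

/-- The relative trace map `Tr_Q^Γ` on endomorphisms, using a set of representatives of the
left cosets `Γ/Q`. -/
noncomputable def relTrace [Finite Gam] (Q : Subgroup Gam) (X : Type u) [AddCommMonoid X]
    [Module (MonoidAlgebra O Gam) X] (f : X →+ X) : X →+ X :=
  letI : Fintype (Gam ⧸ Q) := Fintype.ofFinite _
  ∑ c : Gam ⧸ Q, (gAct O X c.out).comp (f.comp (gAct O X c.out⁻¹))

/-- Higman's criterion, as a definition: an `OΓ`-module is relatively `Q`-projective if the
identity is the relative trace of an `OQ`-endomorphism.  This is equivalent to `X` being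
isomorphic to a direct summand of `Ind_Q^Γ Res_Q X`. -/
noncomputable def IsRelativelyProjective [Finite Gam] (Q : Subgroup Gam) (X : Type u)
    [AddCommMonoid X] [Module (MonoidAlgebra O Gam) X] : Prop :=
  ∃ f : X →+ X, IsRelEndo O Q X f ∧ relTrace O Q X f = AddMonoidHom.id X

/-- `Q` is a vertex of the `OΓ`-module `X` if `X` is relatively `Q`-projective and `Q` is
minimal with this property. -/
noncomputable def IsVertex [Finite Gam] (Q : Subgroup Gam) (X : Type u) [AddCommMonoid X]
    [Module (MonoidAlgebra O Gam) X] : Prop :=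
  IsRelativelyProjective O Q X ∧
    ∀ Q' : Subgroup Gam, Q' ≤ Q → IsRelativelyProjective O Q' X → Q' = Q

/-- The right `OQ`-module structure on `OΓ` for a subgroup `Q` of `Γ`. -/
noncomputable instance (Q : Subgroup Gam) :
    Module (MonoidAlgebra O ↥Q)ᵐᵒᵖ (MonoidAlgebra O Gam) :=
  Module.compHom _ (RingHom.op (MonoidAlgebra.mapDomainRingHom O Q.subtype))

lemma opQ_smul_def (Q : Subgroup Gam) (a : (MonoidAlgebra O ↥Q)ᵐᵒᵖ)
    (x : MonoidAlgebra O Gam) :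
    a • x = x * (MonoidAlgebra.mapDomainRingHom O Q.subtype a.unop) := rfl

instance (Q : Subgroup Gam) :
    SMulCommClass (MonoidAlgebra O ↥Q)ᵐᵒᵖ (MonoidAlgebra O Gam) (MonoidAlgebra O Gam) where
  smul_comm a x y := by
    rw [opQ_smul_def, opQ_smul_def, smul_eq_mul, smul_eq_mul, mul_assoc]

/-- The induced module `Ind_Q^Γ V = OΓ ⊗_{OQ} V`. -/
noncomputable abbrev IndMod (Q : Subgroup Gam) (V : Type u) [AddCommGroup V]
    [Module (MonoidAlgebra O ↥Q) V] : Type u :=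
  Tensor (MonoidAlgebra O ↥Q) (MonoidAlgebra O Gam) V

/-- A bundled module over the group algebra `OH`, with compatible `O`-module structure. -/
structure QModPack (H : Type u) [Group H] : Type (u + 1) where
  V : Type u
  [acg : AddCommGroup V]
  [mod : Module (MonoidAlgebra O H) V]
  [omod : Module O V]
  [tower : IsScalarTower O (MonoidAlgebra O H) V]

attribute [instance] QModPack.acg QModPack.mod QModPack.omod QModPack.tower

/-- `(Q, W)` is a vertex-source pair of the `OΓ`-module `X`. -/
noncomputable def IsVertexSourcePair [Finite Gam] (Q : Subgroup Gam) (W : QModPack O ↥Q)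
    (X : Type u) [AddCommMonoid X] [Module (MonoidAlgebra O Gam) X] : Prop :=
  IsVertex O Q X ∧ IsIndecomposableModule (MonoidAlgebra O ↥Q) W.V ∧
    IsDirectSummand (MonoidAlgebra O Gam) (IndMod O Q W.V) X

/-- The action of a group element as an `O`-linear endomorphism. -/
def gEnd {H : Type u} [Group H] (V : Type u) [AddCommGroup V] [Module (MonoidAlgebra O H) V]
    [Module O V] [IsScalarTower O (MonoidAlgebra O H) V] (h : H) : V →ₗ[O] V where
  toFun v := MonoidAlgebra.of O H h • v
  map_add' := smul_add _
  map_smul' r v := by simp only [RingHom.id_apply]; exact algebra_smul_comm r _ v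

/-- A source `W` is an endopermutation module: it is a finitely generated free `O`-module such
that `End_O(W)` has an `O`-basis permuted by the conjugation action of the group. -/
noncomputable def IsEndopermutation {H : Type u} [Group H] (W : QModPack O H) : Prop :=
  Module.Free O W.V ∧ Module.Finite O W.V ∧
  ∃ (I : Type u) (bas : Module.Basis I O (Module.End O W.V)), ∀ (h : H) (i : I), ∃ j : I,
    (gEnd O W.V h) ∘ₗ (bas i) ∘ₗ (gEnd O W.V h⁻¹) = bas j

/-- The `OΓ`-module `X` has an endopermutation source. -/
noncomputable def HasEndopermutationSource [Finite Gam] (X : Type u) [AddCommMonoid X]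
    [Module (MonoidAlgebra O Gam) X] : Prop :=
  ∃ (Q : Subgroup Gam) (W : QModPack O ↥Q), IsVertexSourcePair O Q W X ∧
    IsEndopermutation O W

/-- The `OΓ`-module `X` has a linear source (a source of `O`-rank 1). -/
noncomputable def HasLinearSource [Finite Gam] (X : Type u) [AddCommMonoid X]
    [Module (MonoidAlgebra O Gam) X] : Prop :=
  ∃ (Q : Subgroup Gam) (W : QModPack O ↥Q), IsVertexSourcePair O Q W X ∧
    Module.Free O W.V ∧ Module.rank O W.V = 1

/-- The `OΓ`-module `X` has a trivial source. -/
noncomputable def HasTrivialSource [Finite Gam] (X : Type u) [AddCommMonoid X]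
    [Module (MonoidAlgebra O Gam) X] : Prop :=
  ∃ (Q : Subgroup Gam) (W : QModPack O ↥Q), IsVertexSourcePair O Q W X ∧
    ∃ e : W.V ≃ₗ[O] O, ∀ (q : ↥Q) (v : W.V), e (MonoidAlgebra.of O ↥Q q • v) = e v

end Vertices

/-! ## Blocks, block bimodules, defect groups -/

section Blocks

variable (O : Type u) [CommRing O] (G : Type u) [Group G]

/-- `b` is a block idempotent of `OG`: a nonzero central idempotent which is primitive in the
centre of `OG`. -/
def IsBlockIdem (b : GA O G) : Prop :=
  b * b = b ∧ b ≠ 0 ∧ (∀ x, b * x = x * b) ∧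
    ∀ c d : GA O G, c * c = c → d * d = d → (∀ x, c * x = x * c) → (∀ x, d * x = x * d) →
      c * d = 0 → b = c + d → c = 0 ∨ d = 0

/-- Class recording that an element of the group algebra is central. -/
class CentralElem (b : GA O G) : Prop where
  comm : ∀ x, b * x = x * b

/-- The block algebra `OGb` as a right submodule of `OG`. -/
def blockSub (b : GA O G) : Submodule (GA O G)ᵐᵒᵖ (GA O G) where
  carrier := {x | b * x = x}
  add_mem' := by
    intro x y hx hy
    show b * _ = _
    rw [mul_add, hx, hy]
  zero_mem' := by show b * 0 = 0; rw [mul_zero]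
  smul_mem' := by
    intro a x hx
    show b * (x * a.unop) = x * a.unop
    rw [← mul_assoc, hx]

/-- The block algebra `B = OGb`, as an `OG`-`OG`-bimodule. -/
def BlockMod (b : GA O G) : Type u := ↥(blockSub O G b)

instance (b : GA O G) : AddCommGroup (BlockMod O G b) :=
  inferInstanceAs (AddCommGroup ↥(blockSub O G b))

instance (b : GA O G) : Module (GA O G)ᵐᵒᵖ (BlockMod O G b) :=
  inferInstanceAs (Module (GA O G)ᵐᵒᵖ ↥(blockSub O G b))

instance (b : GA O G) [CentralElem O G b] : Module (GA O G) (BlockMod O G b) where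
  smul a x := ⟨a * x.1, by
    show b * _ = _
    rw [← mul_assoc, CentralElem.comm (b := b) a, mul_assoc, x.2]⟩
  one_smul x := Subtype.ext (one_mul x.1)
  mul_smul a c x := Subtype.ext (mul_assoc a c x.1)
  smul_zero a := Subtype.ext (mul_zero a)
  smul_add a x y := Subtype.ext (mul_add a x.1 y.1)
  add_smul a c x := Subtype.ext (add_mul a c x.1)
  zero_smul x := Subtype.ext (zero_mul x.1)

lemma blockMod_lsmul_def (b : GA O G) [CentralElem O G b] (a : GA O G)
    (x : BlockMod O G b) : (a • x).1 = a * x.1 := rfl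

lemma blockMod_rsmul_def (b : GA O G) (a : (GA O G)ᵐᵒᵖ) (x : BlockMod O G b) :
    (a • x).1 = x.1 * a.unop := rfl

instance (b : GA O G) [CentralElem O G b] :
    SMulCommClass (GA O G) (GA O G)ᵐᵒᵖ (BlockMod O G b) where
  smul_comm a c x := by
    apply Subtype.ext
    rw [blockMod_lsmul_def, blockMod_rsmul_def, blockMod_rsmul_def, blockMod_lsmul_def,
      mul_assoc]

instance (b : GA O G) [CentralElem O G b] :
    SMulCommClass (GA O G)ᵐᵒᵖ (GA O G) (BlockMod O G b) :=
  SMulCommClass.symm _ _ _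

instance (b : GA O G) [CentralElem O G b] : Module O (BlockMod O G b) :=
  Module.compHom _ (algebraMap O (GA O G))

lemma blockMod_osmul_def (b : GA O G) [CentralElem O G b] (r : O) (x : BlockMod O G b) :
    (r • x).1 = algebraMap O (GA O G) r * x.1 := rfl

instance (b : GA O G) [CentralElem O G b] :
    IsScalarTower O (GA O G) (BlockMod O G b) where
  smul_assoc r a x := by
    apply Subtype.ext
    rw [blockMod_lsmul_def, blockMod_osmul_def, blockMod_lsmul_def, ← mul_assoc,
      ← Algebra.smul_def]

instance (b : GA O G) [CentralElem O G b] : OCentralBimodule O G (BlockMod O G b) where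
  right_compat r x := by
    apply Subtype.ext
    rw [blockMod_rsmul_def, blockMod_osmul_def, MulOpposite.unop_op, ← Algebra.commutes]

/-- A bimodule over the group algebra `OG` with compatible `O`-structure, bundled. -/
structure GBimodPack : Type (u + 1) where
  V : Type u
  [acg : AddCommGroup V]
  [lmod : Module (GA O G) V]
  [rmod : Module (GA O G)ᵐᵒᵖ V]
  [comm : SMulCommClass (GA O G) (GA O G)ᵐᵒᵖ V]
  [comm' : SMulCommClass (GA O G)ᵐᵒᵖ (GA O G) V]
  [omod : Module O V]
  [tower : IsScalarTower O (GA O G) V]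
  [ocentral : OCentralBimodule O G V]

attribute [instance] GBimodPack.acg GBimodPack.lmod GBimodPack.rmod GBimodPack.comm
  GBimodPack.comm' GBimodPack.omod GBimodPack.tower GBimodPack.ocentral

/-- The bimodule `M` is unital over the block determined by `b`, i.e. `b` acts as identity on
both sides; such bimodules are exactly the `B`-`B`-bimodules for `B = OGb`. -/
def IsBlockBimod (b : GA O G) (M : Type u) [AddCommGroup M] [Module (GA O G) M]
    [Module (GA O G)ᵐᵒᵖ M] : Prop :=
  (∀ m : M, b • m = m) ∧ ∀ m : M, MulOpposite.op b • m = m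

/-- `M` is an invertible `B`-`B`-bimodule for the block algebra `B = OGb`: it is unital over
the block, finitely generated projective on both sides, and has a tensor inverse `N` with
`M ⊗_B N ≅ B ≅ N ⊗_B M`. (For unital bimodules, tensoring over `OG` agrees with tensoring
over `B`.) -/
def IsInvertibleBlockBimod (b : GA O G) [CentralElem O G b] (M : Type u) [AddCommGroup M]
    [Module (GA O G) M] [Module (GA O G)ᵐᵒᵖ M] [SMulCommClass (GA O G) (GA O G)ᵐᵒᵖ M]
    [SMulCommClass (GA O G)ᵐᵒᵖ (GA O G) M] : Prop :=
  IsBlockBimod O G b M ∧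
  Module.Finite (GA O G) M ∧ Module.Projective (GA O G) M ∧
  Module.Finite (GA O G)ᵐᵒᵖ M ∧ Module.Projective (GA O G)ᵐᵒᵖ M ∧
  ∃ N : GBimodPack O G, IsBlockBimod O G b N.V ∧
    BimodIsoNonempty (GA O G) (GA O G) (Tensor (GA O G) M N.V) (BlockMod O G b) ∧
    BimodIsoNonempty (GA O G) (GA O G) (Tensor (GA O G) N.V M) (BlockMod O G b)

/-- The diagonal copy of a subgroup `P ≤ G` inside `G × G`. -/
def diagSub (P : Subgroup G) : Subgroup (G × G) :=
  P.map ((MonoidHom.id G).prod (MonoidHom.id G))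

/-- `P` is a defect group of the block `b`: the diagonal subgroup `ΔP` is a vertex of the
block algebra `B = OGb` regarded as an `O(G × G)`-module. -/
noncomputable def IsDefectGroup [Finite G] (P : Subgroup G) (b : GA O G)
    [CentralElem O G b] : Prop :=
  IsBlockIdem O G b ∧ IsVertex O (diagSub G P) (DiagMod O G (BlockMod O G b))

end Blocks

/-! ## Statement 16 -/

section Stmt16

variable (O : Type u) [CommRing O]

noncomputable instance {Gam : Type u} [Group Gam] (R : Subgroup Gam) (X : Type u)
    [AddCommGroup X] [Module (MonoidAlgebra O Gam) X] [Module (MonoidAlgebra O Gam)ᵐᵒᵖ X] :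
    Module (MonoidAlgebra O Gam)ᵐᵒᵖ (ResAlong O R.subtype X) :=
  inferInstanceAs (Module (MonoidAlgebra O Gam)ᵐᵒᵖ X)

noncomputable instance {Gam : Type u} [Group Gam] (R : Subgroup Gam) (X : Type u)
    [AddCommGroup X] [Module (MonoidAlgebra O Gam) X] [Module (MonoidAlgebra O Gam)ᵐᵒᵖ X]
    [SMulCommClass (MonoidAlgebra O Gam) (MonoidAlgebra O Gam)ᵐᵒᵖ X] :
    SMulCommClass (MonoidAlgebra O ↥R) (MonoidAlgebra O Gam)ᵐᵒᵖ (ResAlong O R.subtype X) where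
  smul_comm a c x :=
    smul_comm ((MonoidAlgebra.mapDomainRingHom O R.subtype) a) c (show X from x)

/-!
Tensoring with an invertible bimodule `X` (inverse `N`) is an equivalence, so a `B`-module `U`
is recovered as `X ⊗_B (N ⊗_B U)`. Since `X` is a summand of `OG ⊗_{OR} X`, this is a summand of
`OG ⊗_{OR} (X ⊗_B N ⊗_B U)`, an induced module; and any summand `U` of an induced module
`OG ⊗_{OR} W` is a summand of `OG ⊗_{OR} Res U`, by factoring the projection through the counit
`g ⊗ u ↦ g • u` of the induction–restriction adjunction.
-/

namespace Tensor

section API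

variable {A : Type*} [Ring A] {M : Type*} [AddCommGroup M] [Module Aᵐᵒᵖ M]
  {N : Type*} [AddCommGroup N] [Module A N] {P : Type*} [AddCommGroup P]

lemma mk_add_left (m m' : M) (n : N) :
    mk A M N (m + m') n = mk A M N m n + mk A M N m' n := by
  rw [mk, TensorProduct.add_tmul, q_add]; rfl

lemma mk_add_right (m : M) (n n' : N) :
    mk A M N m (n + n') = mk A M N m n + mk A M N m n' := by
  rw [mk, TensorProduct.tmul_add, q_add]; rfl

lemma mk_balance (a : A) (m : M) (n : N) :
    mk A M N (MulOpposite.op a • m) n = mk A M N m (a • n) :=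
  (Submodule.Quotient.eq _).2 (Submodule.subset_span ⟨a, m, n, rfl⟩)

variable (A M N) in
def mkHom : M →+ N →+ Tensor A M N :=
  AddMonoidHom.mk' (fun m => AddMonoidHom.mk' (mk A M N m) (mk_add_right m))
    fun m m' => AddMonoidHom.ext (mk_add_left m m')

@[simp] lemma mkHom_apply (m : M) (n : N) : mkHom A M N m n = mk A M N m n := rfl

@[simp] lemma mk_zero_left (n : N) : mk A M N 0 n = 0 := by
  rw [← mkHom_apply, map_zero, AddMonoidHom.zero_apply]

@[elab_as_elim] lemma induction_on {C : Tensor A M N → Prop} (z : Tensor A M N)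
    (zero : C 0) (mk : ∀ m n, C (mk A M N m n)) (add : ∀ x y, C x → C y → C (x + y)) : C z := by
  obtain ⟨t, rfl⟩ := q_surjective A M N z
  induction t with
  | zero => exact zero
  | tmul m n => exact mk m n
  | add x y hx hy => rw [q_add]; exact add _ _ hx hy

lemma addHom_ext {f g : Tensor A M N →+ P} (h : ∀ m n, f (mk A M N m n) = g (mk A M N m n)) :
    f = g :=
  AddMonoidHom.ext fun z => induction_on z (by simp only [map_zero]) h
    fun x y hx hy => by simp only [map_add, hx, hy]

def lift (f : M →+ N →+ P) (hf : ∀ (a : A) m n, f (MulOpposite.op a • m) n = f m (a • n)) :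
    Tensor A M N →+ P :=
  ((tensorRel A M N).liftQ
    (TensorProduct.liftAddHom f fun k m n => by
      simp only [map_zsmul, AddMonoidHom.zsmul_apply]).toIntLinearMap
    (Submodule.span_le.2 <| by
      rintro _ ⟨a, m, n, rfl⟩
      simp [hf])).toAddMonoidHom

@[simp] lemma lift_mk (f : M →+ N →+ P) (hf) (m : M) (n : N) :
    lift (A := A) f hf (mk A M N m n) = f m n := rfl

section Actions

variable (S : Type*) [Ring S] [Module S M] [SMulCommClass Aᵐᵒᵖ S M]

lemma smul_mk (s : S) (m : M) (n : N) : s • mk A M N m n = mk A M N (s • m) n := by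
  have h : s • q A M N (m ⊗ₜ[ℤ] n) = q A M N (s • (m ⊗ₜ[ℤ] n)) := rfl
  rw [mk, h, TensorProduct.smul_tmul']
  rfl

lemma op_smul_mk {C : Type*} [Ring C] [Module Cᵐᵒᵖ N] [SMulCommClass A Cᵐᵒᵖ N]
    (c : Cᵐᵒᵖ) (m : M) (n : N) : c • mk A M N m n = mk A M N m (c • n) := by
  rw [mk, rsmul_mk, LinearMap.lTensor_tmul]
  rfl

variable [Module S P]

lemma linearMap_ext {f g : Tensor A M N →ₗ[S] P}
    (h : ∀ m n, f (mk A M N m n) = g (mk A M N m n)) : f = g :=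
  LinearMap.toAddMonoidHom_injective (addHom_ext h)

def liftₗ (f : M →+ N →+ P) (hf : ∀ (a : A) m n, f (MulOpposite.op a • m) n = f m (a • n))
    (hS : ∀ (s : S) m n, f (s • m) n = s • f m n) : Tensor A M N →ₗ[S] P where
  toFun := lift f hf
  map_add' := map_add _
  map_smul' s z := induction_on z (by simp only [smul_zero, map_zero])
    (fun m n => by simp only [smul_mk, lift_mk, hS, RingHom.id_apply])
    fun x y hx hy => by simp_all only [smul_add, map_add, RingHom.id_apply]

def lmap {M' : Type*} [AddCommGroup M'] [Module Aᵐᵒᵖ M'] [Module S M']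
    [SMulCommClass Aᵐᵒᵖ S M'] (f : M →+ M') (hA : ∀ (c : Aᵐᵒᵖ) m, f (c • m) = c • f m)
    (hS : ∀ (s : S) m, f (s • m) = s • f m) :
    Tensor A M N →ₗ[S] Tensor A M' N :=
  liftₗ S ((mkHom A M' N).comp f) (fun a m n => by simp [hA, mk_balance])
    fun s m n => by simp [hS, smul_mk]

@[simp] lemma lmap_mk {M' : Type*} [AddCommGroup M'] [Module Aᵐᵒᵖ M'] [Module S M']
    [SMulCommClass Aᵐᵒᵖ S M'] (f : M →+ M') (hA) (hS) (m : M) (n : N) :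
    lmap (N := N) S f hA hS (mk A M N m n) = mk A M' N (f m) n := rfl

def rmap {N' : Type*} [AddCommGroup N'] [Module A N'] (f : N →ₗ[A] N') :
    Tensor A M N →ₗ[S] Tensor A M N' :=
  liftₗ S ((mkHom A M N').compl₂ f.toAddMonoidHom) (fun a m n => by simp [mk_balance])
    fun s m n => by simp [smul_mk]

variable {S}

theorem isDirectSummand_of_isBimodDirectSummand {M' : Type*} [AddCommGroup M'] [Module Aᵐᵒᵖ M']
    [Module S M'] [SMulCommClass Aᵐᵒᵖ S M'] (h : IsBimodDirectSummand S A M' M) :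
    IsDirectSummand S (Tensor A M' N) (Tensor A M N) := by
  obtain ⟨ι, p, hιS, hιA, hpS, hpA, hpι⟩ := h
  refine ⟨lmap S ι hιA hιS, lmap S p hpA hpS, linearMap_ext S fun m n => ?_⟩
  simp [← AddMonoidHom.comp_apply p ι, hpι]

end Actions

end API

section Assoc

variable {A B S : Type*} [Ring A] [Ring B] [Ring S]
  {M : Type*} [AddCommGroup M] [Module Aᵐᵒᵖ M] [Module S M] [SMulCommClass Aᵐᵒᵖ S M]
  {P : Type*} [AddCommGroup P] [Module A P] [Module Bᵐᵒᵖ P]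
  [SMulCommClass A Bᵐᵒᵖ P] [SMulCommClass Bᵐᵒᵖ A P]
  {Q : Type*} [AddCommGroup Q] [Module B Q]

variable (S) in
def assoc : Tensor B (Tensor A M P) Q →ₗ[S] Tensor A M (Tensor B P Q) :=
  let inner : Tensor A M P →+ Q →+ Tensor A M (Tensor B P Q) :=
    lift (AddMonoidHom.mk' (fun m => (mkHom B P Q).compr₂ (mkHom A M _ m))
      fun m m' => by ext; simp)
      fun a m p => by ext; simp [mk_balance, smul_mk]
  liftₗ S inner
    (fun b z q => induction_on z (by simp) (fun m p => by simp [inner, op_smul_mk, mk_balance])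
      fun x y hx hy => by simp_all [smul_add])
    fun s z q => induction_on z (by simp) (fun m p => by simp [inner, smul_mk])
      fun x y hx hy => by simp_all [smul_add]

@[simp] lemma assoc_mk_mk (m : M) (p : P) (q : Q) :
    assoc S (mk B (Tensor A M P) Q (mk A M P m p) q) = mk A M (Tensor B P Q) m (mk B P Q p q) :=
  rfl

variable (S) in
def assocSymm : Tensor A M (Tensor B P Q) →ₗ[S] Tensor B (Tensor A M P) Q :=
  let inner : M →+ Tensor B P Q →+ Tensor B (Tensor A M P) Q :=
    AddMonoidHom.mk' (fun m => lift ((mkHom B (Tensor A M P) Q).comp (mkHom A M P m))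
      fun b p q => by
        simp only [AddMonoidHom.comp_apply, mkHom_apply]
        rw [← op_smul_mk, mk_balance])
      fun m m' => addHom_ext fun p q => by simp
  liftₗ S inner
    (fun a m w => induction_on w (by simp) (fun p q => by simp [inner, smul_mk, mk_balance])
      fun x y hx hy => by simp_all [smul_add])
    fun s m w => induction_on w (by simp) (fun p q => by simp [inner, smul_mk])
      fun x y hx hy => by simp_all [smul_add]

@[simp] lemma assocSymm_mk_mk (m : M) (p : P) (q : Q) :
    assocSymm S (mk A M (Tensor B P Q) m (mk B P Q p q)) =
      mk B (Tensor A M P) Q (mk A M P m p) q :=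
  rfl

lemma assocSymm_comp_assoc :
    assocSymm S ∘ₗ assoc S = (LinearMap.id : Tensor B (Tensor A M P) Q →ₗ[S] _) :=
  linearMap_ext S fun z q => induction_on z (by simp) (fun m p => by simp)
    fun x y hx hy => by simp_all [mk_add_left]

theorem isDirectSummand_assoc :
    IsDirectSummand S (Tensor A M (Tensor B P Q)) (Tensor B (Tensor A M P) Q) :=
  ⟨assoc S, assocSymm S, assocSymm_comp_assoc⟩

end Assoc

end Tensor

theorem IsDirectSummand.trans {S : Type*} [Ring S] {U V W : Type*} [AddCommMonoid U]
    [AddCommMonoid V] [AddCommMonoid W] [Module S U] [Module S V] [Module S W]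
    (hUV : IsDirectSummand S V U) (hVW : IsDirectSummand S W V) : IsDirectSummand S W U := by
  obtain ⟨ι, p, hpι⟩ := hUV
  obtain ⟨ι', p', hpι'⟩ := hVW
  refine ⟨ι' ∘ₗ ι, p ∘ₗ p', ?_⟩
  rw [LinearMap.comp_assoc, ← LinearMap.comp_assoc ι, hpι', LinearMap.id_comp, hpι]

theorem BimodIsoNonempty.isBimodDirectSummand {B C : Type*} [Ring B] [Ring C] {X Y : Type*}
    [AddCommMonoid X] [AddCommMonoid Y] [Module B X] [Module Cᵐᵒᵖ X] [Module B Y]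
    [Module Cᵐᵒᵖ Y] (h : BimodIsoNonempty B C X Y) : IsBimodDirectSummand B C X Y := by
  obtain ⟨e, hB, hC⟩ := h
  refine ⟨e.symm.toAddMonoidHom, e.toAddMonoidHom, fun b y => e.injective ?_,
    fun c y => e.injective ?_, hB, hC, AddMonoidHom.ext e.apply_symm_apply⟩ <;> simp [hB, hC]

theorem isDirectSummand_blockMod_tensor {G : Type u} [Group G] {b : GA O G} [CentralElem O G b]
    (hb : b * b = b) {U : Type*} [AddCommGroup U] [Module (GA O G) U] (hU : ∀ u : U, b • u = u) :
    IsDirectSummand (GA O G) (Tensor (GA O G) (BlockMod O G b) U) U := by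
  let unit : BlockMod O G b := ⟨b, hb⟩
  refine ⟨⟨⟨Tensor.mk _ _ U unit, Tensor.mk_add_right unit⟩, fun a u => ?_⟩,
    Tensor.liftₗ _ (AddMonoidHom.mk' (fun x : BlockMod O G b => smulAddHom (GA O G) U x.1)
        fun x y => map_add (smulAddHom (GA O G) U) x.1 y.1)
      (fun a x u => show (MulOpposite.op a • x).1 • u = x.1 • a • u by
        rw [blockMod_rsmul_def, MulOpposite.unop_op, mul_smul])
      (fun a x u => show (a • x).1 • u = a • x.1 • u by rw [blockMod_lsmul_def, mul_smul]),
    LinearMap.ext hU⟩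
  have hcentral : MulOpposite.op a • unit = a • unit :=
    Subtype.ext (CentralElem.comm a)
  show Tensor.mk _ _ U unit (a • u) = a • Tensor.mk _ _ U unit u
  rw [← Tensor.mk_balance, Tensor.smul_mk, hcentral]

section InductionRestriction

variable {Γ : Type u} [Group Γ] (R : Subgroup Γ)

noncomputable instance (X : Type u) [AddCommGroup X] [Module (MonoidAlgebra O Γ) X]
    [Module (MonoidAlgebra O Γ)ᵐᵒᵖ X]
    [SMulCommClass (MonoidAlgebra O Γ) (MonoidAlgebra O Γ)ᵐᵒᵖ X] :
    SMulCommClass (MonoidAlgebra O Γ)ᵐᵒᵖ (MonoidAlgebra O ↥R) (ResAlong O R.subtype X) :=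
  SMulCommClass.symm _ _ _

def indResCounit (U : Type u) [AddCommGroup U] [Module (MonoidAlgebra O Γ) U] :
    Tensor (MonoidAlgebra O R) (MonoidAlgebra O Γ) (ResAlong O R.subtype U)
      →ₗ[MonoidAlgebra O Γ] U :=
  Tensor.liftₗ _ (smulAddHom (MonoidAlgebra O Γ) U)
    (fun r g u => mul_smul g (MonoidAlgebra.mapDomainRingHom O R.subtype r) (show U from u))
    fun s g u => mul_smul s g (show U from u)

def resAdjunct {W : Type*} [AddCommGroup W] [Module (MonoidAlgebra O R) W] {U : Type u}
    [AddCommGroup U] [Module (MonoidAlgebra O Γ) U]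
    (π : Tensor (MonoidAlgebra O R) (MonoidAlgebra O Γ) W →ₗ[MonoidAlgebra O Γ] U) :
    W →ₗ[MonoidAlgebra O R] ResAlong O R.subtype U where
  toFun w := π (Tensor.mk _ _ _ 1 w)
  map_add' w w' := by rw [Tensor.mk_add_right, map_add]; rfl
  map_smul' r w := by
    have hunit : MulOpposite.op r • (1 : MonoidAlgebra O Γ) =
        MonoidAlgebra.mapDomainRingHom O R.subtype r • 1 := by
      rw [opQ_smul_def, smul_eq_mul, one_mul, mul_one]; rfl
    rw [← Tensor.mk_balance, hunit, ← Tensor.smul_mk, map_smul]; rfl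

lemma indResCounit_comp_rmap_resAdjunct {W : Type*} [AddCommGroup W]
    [Module (MonoidAlgebra O R) W] {U : Type u} [AddCommGroup U] [Module (MonoidAlgebra O Γ) U]
    (π : Tensor (MonoidAlgebra O R) (MonoidAlgebra O Γ) W →ₗ[MonoidAlgebra O Γ] U) :
    indResCounit O R U ∘ₗ Tensor.rmap _ (resAdjunct O R π) = π :=
  Tensor.linearMap_ext _ fun g w => by
    show g • π (Tensor.mk _ _ _ 1 w) = π (Tensor.mk _ _ _ g w)
    rw [← map_smul, Tensor.smul_mk, smul_eq_mul, mul_one]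

theorem isDirectSummand_indRes_of_isDirectSummand_ind {W : Type*} [AddCommGroup W]
    [Module (MonoidAlgebra O R) W] {U : Type u} [AddCommGroup U] [Module (MonoidAlgebra O Γ) U]
    (h : IsDirectSummand (MonoidAlgebra O Γ)
      (Tensor (MonoidAlgebra O R) (MonoidAlgebra O Γ) W) U) :
    IsDirectSummand (MonoidAlgebra O Γ)
      (Tensor (MonoidAlgebra O R) (MonoidAlgebra O Γ) (ResAlong O R.subtype U)) U := by
  obtain ⟨ι, π, hπι⟩ := h
  refine ⟨Tensor.rmap _ (resAdjunct O R π) ∘ₗ ι, indResCounit O R U, ?_⟩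
  rw [← LinearMap.comp_assoc, indResCounit_comp_rmap_resAdjunct, hπι]

end InductionRestriction

theorem invertible_bimodule_relative_projectivity
    {G : Type u} [Group G]
    (b : GA O G) [CentralElem O G b] (hb : b * b = b)
    (X : Type u) [AddCommGroup X] [Module (GA O G) X] [Module (GA O G)ᵐᵒᵖ X]
    [SMulCommClass (GA O G) (GA O G)ᵐᵒᵖ X] [SMulCommClass (GA O G)ᵐᵒᵖ (GA O G) X]
    (hX : IsInvertibleBlockBimod O G b X)
    (R : Subgroup G)
    (hsummand : IsBimodDirectSummand (GA O G) (GA O G)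
      (Tensor (MonoidAlgebra O ↥R) (MonoidAlgebra O G) (ResAlong O R.subtype X)) X) :
    ∀ (U : Type u) [AddCommGroup U] [Module (GA O G) U], (∀ u : U, b • u = u) →
      IsDirectSummand (GA O G)
        (Tensor (MonoidAlgebra O ↥R) (MonoidAlgebra O G) (ResAlong O R.subtype U)) U := by
  obtain ⟨-, -, -, -, -, N, -, hXN, -⟩ := hX
  intro U _ _ hU
  apply isDirectSummand_indRes_of_isDirectSummand_ind O R
    (W := Tensor (GA O G) (ResAlong O R.subtype X) (Tensor (GA O G) N.V U))
  exact (isDirectSummand_blockMod_tensor O hb hU).trans <|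
    (Tensor.isDirectSummand_of_isBimodDirectSummand hXN.isBimodDirectSummand).trans <|
    Tensor.isDirectSummand_assoc.trans <|
    (Tensor.isDirectSummand_of_isBimodDirectSummand hsummand).trans Tensor.isDirectSummand_assoc

end Stmt16

end Paper
end
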